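/- Let G be a meromorphic-type function with simple zeros (z_n) and simple poles (p_n) as in the context, and let n₋(R) and n₊(R) denote the number of zeros and poles of modulus less than R, respectively. If there is a constant C > 0 such that for every N, |G'(ω)/G(ω)| ≤ C/R_N for all ω with |ω| = R_N, then |n₋(R_N) − n₊(R_N)| ≤ C for every N; in particular, liminf_{R→∞} |n₋(R) − n₊(R)| ≤ C. -/

import Mathlib

/-!
By the argument principle, `(2πi)⁻¹ ∮_{|ω| = R_N} G'/G = n₋(R_N) - n₊(R_N)`, and the bound on
`G'/G` makes the integral at most `2π R_N · C / R_N = 2π C` in norm.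

The argument principle is derived from a residue theorem for simple poles: subtracting the
principal parts `m_a / (ω - a)` leaves a function with removable singularities, whose circle
integral vanishes by Cauchy's theorem. The residue of `G'/G` is `1` at a simple zero and `-1` at a
simple pole `a`, where `(ω - a) G ω` extends holomorphically with a nonzero value at `a`.
-/

open Complex Filter Topology Metric
open scoped Real

theorem Set.Finite.eventually_notMem_nhdsNE {X : Type*} [TopologicalSpace X] [T1Space X]
    {s : Set X} (hs : s.Finite) (a : X) : ∀ᶠ z in 𝓝[≠] a, z ∉ s := by
  have : (s \ {a})ᶜ ∈ 𝓝 a := hs.sdiff.isClosed.isOpen_compl.mem_nhds fun h => h.2 rfl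
  filter_upwards [nhdsWithin_le_nhds this, self_mem_nhdsWithin] with z hs' hz hzs
  exact hs' ⟨hzs, hz⟩

theorem isClosed_range_of_finite_norm_lt {E ι : Type*} [NormedAddCommGroup E] {p : ι → E}
    (hp : ∀ r : ℝ, {i | ‖p i‖ < r}.Finite) : IsClosed (Set.range p) := by
  rw [← Set.iUnion_singleton_eq_range]
  refine LocallyFinite.isClosed_iUnion (fun w => ?_) fun _ => isClosed_singleton
  refine ⟨ball 0 (‖w‖ + 1), isOpen_ball.mem_nhds (by simp), (hp (‖w‖ + 1)).subset ?_⟩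
  rintro i ⟨_, rfl, hi⟩
  simpa using hi

theorem tendsto_limUnder_of_tendsto_sub_mul {H : ℂ → ℂ} {a : ℂ}
    (hd : ∀ᶠ z in 𝓝[≠] a, DifferentiableAt ℂ H z)
    (h : Tendsto (fun z => (z - a) * H z) (𝓝[≠] a) (𝓝 0)) :
    Tendsto H (𝓝[≠] a) (𝓝 (limUnder (𝓝[≠] a) H)) := by
  refine Complex.tendsto_limUnder_of_differentiable_on_punctured_nhds_of_isLittleO hd ?_
  have hsub : Tendsto (fun z => z - a) (𝓝[≠] a) (𝓝 0) :=
    tendsto_sub_nhds_zero_iff.2 nhdsWithin_le_nhds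
  rw [Asymptotics.isLittleO_iff_tendsto' ?_]
  · simpa using (h.sub (hsub.mul_const (H a))).congr fun z => by field_simp
  · filter_upwards [self_mem_nhdsWithin] with z hz h0
    simp [sub_eq_zero.not.2 hz] at h0

theorem circleIntegral_eq_zero_of_tendsto_sub_mul {H : ℂ → ℂ} {c : ℂ} {r : ℝ} (hr : 0 ≤ r)
    {S : Finset ℂ} (hS : ↑S ⊆ ball c r)
    (hd : ∀ w ∈ closedBall c r, w ∉ S → DifferentiableAt ℂ H w)
    (hres : ∀ a ∈ S, Tendsto (fun z => (z - a) * H z) (𝓝[≠] a) (𝓝 0)) :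
    ∮ z in C(c, r), H z = 0 := by
  classical
  set H' : ℂ → ℂ := fun w => if w ∈ S then limUnder (𝓝[≠] w) H else H w
  have hH'_nhds : ∀ w ∉ S, H' =ᶠ[𝓝 w] H := fun w hw => by
    filter_upwards [S.finite_toSet.isClosed.isOpen_compl.mem_nhds hw] with u hu
    simp [H', show u ∉ S from hu]
  have hcont : ContinuousOn H' (closedBall c r) := by
    intro w hw
    refine ContinuousAt.continuousWithinAt ?_
    by_cases hwS : w ∈ S
    · have hball : ∀ᶠ z in 𝓝[≠] w, z ∈ closedBall c r :=
        nhdsWithin_le_nhds (closedBall_mem_nhds_of_mem (hS hwS))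
      have hout := S.finite_toSet.eventually_notMem_nhdsNE w
      have hlim := tendsto_limUnder_of_tendsto_sub_mul
        (by filter_upwards [hball, hout] with z hz hzS using hd z hz hzS) (hres w hwS)
      rw [← continuousWithinAt_compl_self, ContinuousWithinAt]
      simp only [H', if_pos hwS]
      refine hlim.congr' ?_
      filter_upwards [hout] with z hz
      simp [show z ∉ S from hz]
    · exact (hd w hw hwS).continuousAt.congr (hH'_nhds w hwS).symm
  calc ∮ z in C(c, r), H z = ∮ z in C(c, r), H' z := by
        refine circleIntegral.integral_congr hr fun z hz => ?_
        have hzS : z ∉ S := fun h => (mem_sphere.1 hz).not_lt (hS h)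
        simp [H', hzS]
    _ = 0 := circleIntegral_eq_zero_of_differentiable_on_off_countable hr S.countable_toSet hcont
        fun z hz =>
          (hH'_nhds z hz.2).differentiableAt_iff.2 (hd z (ball_subset_closedBall hz.1) hz.2)

theorem tendsto_sub_mul_sum_div_sub {S : Finset ℂ} (m : ℂ → ℂ) {a : ℂ} (ha : a ∈ S) :
    Tendsto (fun z => (z - a) * ∑ b ∈ S, m b / (z - b)) (𝓝[≠] a) (𝓝 (m a)) := by
  simp_rw [Finset.mul_sum]
  rw [← Finset.sum_ite_eq_of_mem' S a m ha]
  refine tendsto_finsetSum S fun b _ => ?_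
  split_ifs with hb
  · subst hb
    refine tendsto_const_nhds.congr' ?_
    filter_upwards [self_mem_nhdsWithin] with z hz
    field_simp [sub_ne_zero.2 hz]
  · have : ContinuousAt (fun z => (z - a) * (m b / (z - b))) a := by
      fun_prop (disch := exact sub_ne_zero.2 (Ne.symm hb))
    simpa using this.tendsto.mono_left nhdsWithin_le_nhds

theorem circleIntegral_eq_two_pi_I_mul_sum_of_simple_poles {F : ℂ → ℂ} {c : ℂ} {r : ℝ}
    (hr : 0 ≤ r) {S : Finset ℂ} (hS : ↑S ⊆ ball c r) (m : ℂ → ℂ)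
    (hd : ∀ w ∈ closedBall c r, w ∉ S → DifferentiableAt ℂ F w)
    (hres : ∀ a ∈ S, Tendsto (fun z => (z - a) * F z) (𝓝[≠] a) (𝓝 (m a))) :
    ∮ z in C(c, r), F z = 2 * π * I * ∑ a ∈ S, m a := by
  set Q : ℂ → ℂ := fun z => ∑ b ∈ S, m b / (z - b)
  have hterm : ∀ w ∉ S, ∀ b ∈ S, DifferentiableAt ℂ (fun z => m b / (z - b)) w :=
    fun w hw b hb => (differentiableAt_const _).div (differentiableAt_id.sub_const b)
      (sub_ne_zero.2 fun h => hw (h ▸ hb))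
  have hsphere : ∀ w ∈ sphere c r, w ∉ S := fun w hw hwS => (mem_sphere.1 hw).not_lt (hS hwS)
  have hterm_int : ∀ b ∈ S, CircleIntegrable (fun z => m b / (z - b)) c r := fun b hb =>
    ContinuousOn.circleIntegrable hr fun w hw =>
      (hterm w (hsphere w hw) b hb).continuousAt.continuousWithinAt
  have hF_int : CircleIntegrable F c r := ContinuousOn.circleIntegrable hr fun w hw =>
    (hd w (sphere_subset_closedBall hw) (hsphere w hw)).continuousAt.continuousWithinAt
  have hQ_int : CircleIntegrable Q c r := by
    simpa [Q, Finset.sum_fn] using CircleIntegrable.sum S hterm_int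
  have hH : ∮ z in C(c, r), (F z - Q z) = 0 := by
    refine circleIntegral_eq_zero_of_tendsto_sub_mul hr hS (fun w hw hwS => ?_) fun a ha => ?_
    · exact (hd w hw hwS).sub (DifferentiableAt.fun_sum (hterm w hwS))
    · simpa [mul_sub] using (hres a ha).sub (tendsto_sub_mul_sum_div_sub m ha)
  have hQ : ∀ b ∈ S, ∮ z in C(c, r), m b / (z - b) = 2 * π * I * m b := fun b hb => by
    simp_rw [div_eq_mul_inv]
    rw [circleIntegral.integral_const_mul, circleIntegral.integral_sub_inv_of_mem_ball (hS hb),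
      mul_comm]
  calc ∮ z in C(c, r), F z = (∮ z in C(c, r), (F z - Q z)) + ∮ z in C(c, r), Q z := by
        rw [← circleIntegral.integral_add (f := fun z => F z - Q z) (hF_int.sub hQ_int) hQ_int]
        simp
    _ = 2 * π * I * ∑ a ∈ S, m a := by
        rw [hH, zero_add, circleIntegral.integral_fun_sum hterm_int, Finset.sum_congr rfl hQ,
          Finset.mul_sum]

theorem tendsto_sub_mul_logDeriv_of_simple_pole {G : ℂ → ℂ} {a ρ : ℂ}
    (hd : ∀ᶠ z in 𝓝[≠] a, DifferentiableAt ℂ G z) (hρ : ρ ≠ 0)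
    (hpole : Tendsto (fun z => (z - a) * G z) (𝓝[≠] a) (𝓝 ρ)) :
    Tendsto (fun z => (z - a) * logDeriv G z) (𝓝[≠] a) (𝓝 (-1)) := by
  set h : ℂ → ℂ := Function.update (fun z => (z - a) * G z) a ρ
  have h_eq : ∀ z ≠ a, h z = (z - a) * G z := fun z hz => Function.update_of_ne hz _ _
  have h_a : h a = ρ := Function.update_self ..
  have h_an : AnalyticAt ℂ h a := by
    refine Complex.analyticAt_of_differentiable_on_punctured_nhds_of_continuousAt ?_ ?_
    · filter_upwards [hd, self_mem_nhdsWithin] with z hz hza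
      have : h =ᶠ[𝓝 z] fun u => (u - a) * G u := by
        filter_upwards [isOpen_compl_singleton.mem_nhds hza] with u hu using h_eq u hu
      exact this.differentiableAt_iff.2 (by fun_prop)
    · rw [← continuousWithinAt_compl_self, ContinuousWithinAt, h_a]
      refine hpole.congr' ?_
      filter_upwards [self_mem_nhdsWithin] with z hz using (h_eq z hz).symm
  have h_ne : ∀ᶠ z in 𝓝[≠] a, h z ≠ 0 :=
    nhdsWithin_le_nhds (h_an.continuousAt.eventually_ne (h_a ▸ hρ))
  have hlog : ∀ᶠ z in 𝓝[≠] a, (z - a) * logDeriv G z = (z - a) * logDeriv h z - 1 := by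
    filter_upwards [h_ne, self_mem_nhdsWithin,
      h_an.eventually_analyticAt.filter_mono nhdsWithin_le_nhds] with z hz hza hzan
    have hG : G =ᶠ[𝓝 z] fun u => h u / (u - a) := by
      filter_upwards [isOpen_compl_singleton.mem_nhds hza] with u hu
      rw [h_eq u hu]
      field_simp [sub_ne_zero.2 hu]
    rw [(logDeriv_congr_nhds hG).self_of_nhds, logDeriv_div (g := fun u => u - a) z hz
      (sub_ne_zero.2 hza) hzan.differentiableAt (by fun_prop)]
    have : logDeriv (fun u => u - a) z = (z - a)⁻¹ := by simp [logDeriv_apply]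
    rw [this]
    field_simp [sub_ne_zero.2 hza]
  have hcont : ContinuousAt (fun z => (z - a) * logDeriv h z) a := by
    have := h_an.deriv.continuousAt.div h_an.continuousAt (h_a ▸ hρ)
    exact (continuousAt_id.sub continuousAt_const).mul this
  simpa using ((hcont.tendsto.mono_left nhdsWithin_le_nhds).sub_const 1).congr'
    (hlog.mono fun z hz => hz.symm)

theorem circleIntegral_logDeriv_eq_card_sub_card {G : ℂ → ℂ} {c : ℂ} {r : ℝ} (hr : 0 ≤ r)
    {Z P : Finset ℂ} (hZ : ↑Z ⊆ ball c r) (hP : ↑P ⊆ ball c r) (hZP : Disjoint Z P)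
    (han : ∀ w ∈ closedBall c r, w ∉ P → AnalyticAt ℂ G w)
    (hGZ : ∀ w ∈ closedBall c r, w ∉ P → G w = 0 → w ∈ Z)
    (hzero : ∀ a ∈ Z, G a = 0 ∧ deriv G a ≠ 0)
    (hpole : ∀ a ∈ P, ∃ ρ ≠ 0, Tendsto (fun z => (z - a) * G z) (𝓝[≠] a) (𝓝 ρ)) :
    ∮ z in C(c, r), logDeriv G z = 2 * π * I * (Z.card - P.card : ℂ) := by
  classical
  set m : ℂ → ℂ := fun a => if a ∈ Z then 1 else -1
  have hsum : ∑ a ∈ Z ∪ P, m a = Z.card - P.card := by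
    rw [Finset.sum_union hZP, Finset.sum_congr rfl fun a ha => if_pos ha,
      Finset.sum_congr rfl fun a ha => if_neg (Finset.disjoint_right.1 hZP ha)]
    simp [sub_eq_add_neg]
  rw [← hsum]
  refine circleIntegral_eq_two_pi_I_mul_sum_of_simple_poles hr
    (Finset.coe_union Z P ▸ Set.union_subset hZ hP) m (fun w hw hwZP => ?_) fun a ha => ?_
  · rw [Finset.mem_union, not_or] at hwZP
    have hG := han w hw hwZP.2
    exact hG.deriv.differentiableAt.div hG.differentiableAt fun h => hwZP.1 (hGZ w hw hwZP.2 h)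
  · rcases Finset.mem_union.1 ha with haZ | haP
    · simp only [m, if_pos haZ]
      exact (han a (ball_subset_closedBall (hZ haZ)) (Finset.disjoint_left.1 hZP haZ)
        ).tendsto_mul_logDeriv_simple_zero (hzero a haZ).1 (hzero a haZ).2
    · simp only [m, if_neg (Finset.disjoint_right.1 hZP haP)]
      obtain ⟨ρ, hρ, hlim⟩ := hpole a haP
      refine tendsto_sub_mul_logDeriv_of_simple_pole ?_ hρ hlim
      filter_upwards [nhdsWithin_le_nhds (closedBall_mem_nhds_of_mem (hP haP)),
        P.finite_toSet.eventually_notMem_nhdsNE a] with z hz hzP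
      exact (han z hz hzP).differentiableAt

theorem abs_le_of_circleIntegral_eq_two_pi_I_mul {f : ℂ → ℂ} {c : ℂ} {r C x : ℝ} (hr : 0 < r)
    (hf : ∮ z in C(c, r), f z = 2 * π * I * x) (hb : ∀ z ∈ sphere c r, ‖f z‖ ≤ C / r) :
    |x| ≤ C := by
  have h := circleIntegral.norm_integral_le_of_norm_le_const hr.le hb
  rw [hf, mul_assoc _ r, mul_div_cancel₀ C hr.ne'] at h
  simp only [norm_mul, Complex.norm_ofNat, Complex.norm_real, Complex.norm_I, Real.norm_eq_abs,
    abs_of_pos Real.pi_pos, mul_one] at h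
  exact le_of_mul_le_mul_left h (by positivity)

theorem analyticAt_of_differentiableAt_off_range {ι : Type*} {G : ℂ → ℂ} {p : ι → ℂ}
    (hpfin : ∀ r : ℝ, {i | ‖p i‖ < r}.Finite)
    (hdiff : ∀ w, w ∉ Set.range p → DifferentiableAt ℂ G w) {w : ℂ} (hw : w ∉ Set.range p) :
    AnalyticAt ℂ G w :=
  Complex.analyticAt_iff_eventually_differentiableAt.2 <|
    eventually_of_mem ((isClosed_range_of_finite_norm_lt hpfin).isOpen_compl.mem_nhds hw) hdiff

theorem abs_card_zeros_sub_card_poles_le (G : ℂ → ℂ) (z p ρ : ℕ → ℂ) {r C : ℝ} (hr : 0 < r)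
    (hz_inj : Function.Injective z) (hp_inj : Function.Injective p)
    (hdisj : ∀ n m, z n ≠ p m)
    (hzfin : {n : ℕ | ‖z n‖ < r}.Finite) (hpfin : ∀ s : ℝ, {n : ℕ | ‖p n‖ < s}.Finite)
    (hdiff : ∀ w : ℂ, w ∉ Set.range p → DifferentiableAt ℂ G w)
    (hzero_iff : ∀ w : ℂ, G w = 0 ↔ ∃ n, w = z n)
    (hzsimple : ∀ n, deriv G (z n) ≠ 0)
    (hres : ∀ n, ρ n ≠ 0 ∧ Tendsto (fun w => (w - p n) * G w) (𝓝[≠] p n) (𝓝 (ρ n)))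
    (hzr : ∀ n, ‖z n‖ ≠ r) (hpr : ∀ n, ‖p n‖ ≠ r)
    (hbound : ∀ w : ℂ, ‖w‖ = r → ‖deriv G w / G w‖ ≤ C / r) :
    |(hzfin.toFinset.card : ℝ) - ((hpfin r).toFinset.card : ℝ)| ≤ C := by
  classical
  set Z := hzfin.toFinset.image z
  set P := (hpfin r).toFinset.image p
  have hZ : ∀ a, a ∈ Z ↔ ∃ n, ‖z n‖ < r ∧ z n = a := by simp [Z]
  have hP : ∀ a, a ∈ P ↔ ∃ n, ‖p n‖ < r ∧ p n = a := by simp [P]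
  have harg := circleIntegral_logDeriv_eq_card_sub_card (G := G) (c := 0) hr.le (Z := Z) (P := P)
    (fun a ha => by obtain ⟨n, hn, rfl⟩ := (hZ a).1 ha; simpa using hn)
    (fun a ha => by obtain ⟨n, hn, rfl⟩ := (hP a).1 ha; simpa using hn)
    (Finset.disjoint_left.2 fun a haZ haP => by
      obtain ⟨n, -, rfl⟩ := (hZ a).1 haZ
      obtain ⟨m, -, hm⟩ := (hP _).1 haP
      exact hdisj n m hm.symm)
    (fun w hw hwP => analyticAt_of_differentiableAt_off_range hpfin hdiff <| by
      rintro ⟨m, rfl⟩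
      exact hwP ((hP _).2 ⟨m, (mem_closedBall_zero_iff.1 hw).lt_of_ne (hpr m), rfl⟩))
    (fun w hw _ hGw => by
      obtain ⟨n, rfl⟩ := (hzero_iff w).1 hGw
      exact (hZ _).2 ⟨n, (mem_closedBall_zero_iff.1 hw).lt_of_ne (hzr n), rfl⟩)
    (fun a ha => by
      obtain ⟨n, -, rfl⟩ := (hZ a).1 ha
      exact ⟨(hzero_iff _).2 ⟨n, rfl⟩, hzsimple n⟩)
    (fun a ha => by
      obtain ⟨m, -, rfl⟩ := (hP a).1 ha
      exact ⟨ρ m, hres m⟩)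
  rw [Finset.card_image_of_injective _ hz_inj, Finset.card_image_of_injective _ hp_inj] at harg
  exact abs_le_of_circleIntegral_eq_two_pi_I_mul (c := 0) (f := logDeriv G) hr
    (by rw [harg]; push_cast; rfl)
    fun w hw => hbound w (by simpa using hw)

theorem stmt_4_general
    (G : ℂ → ℂ) (z p ρ : ℕ → ℂ) (R : ℕ → ℝ) (C : ℝ)
    (hz_inj : Function.Injective z) (hp_inj : Function.Injective p)
    (hdisj : ∀ n m, z n ≠ p m)
    (hzfin : ∀ r : ℝ, {n : ℕ | ‖z n‖ < r}.Finite)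
    (hpfin : ∀ r : ℝ, {n : ℕ | ‖p n‖ < r}.Finite)
    (hdiff : ∀ w : ℂ, w ∉ Set.range p → DifferentiableAt ℂ G w)
    (hzero_iff : ∀ w : ℂ, G w = 0 ↔ ∃ n, w = z n)
    (hzsimple : ∀ n, deriv G (z n) ≠ 0)
    (hres : ∀ n, ρ n ≠ 0 ∧ Tendsto (fun w => (w - p n) * G w) (𝓝[≠] p n) (𝓝 (ρ n)))
    (hRpos : ∀ N, 0 < R N) (hRtop : Tendsto R atTop atTop)
    (hRavoid : ∀ n N, ‖z n‖ ≠ R N ∧ ‖p n‖ ≠ R N)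
    (hbound : ∀ N, ∀ w : ℂ, ‖w‖ = R N →
      ‖deriv G w / G w‖ ≤ C / R N) :
    (∀ N, |((hzfin (R N)).toFinset.card : ℝ) - ((hpfin (R N)).toFinset.card : ℝ)| ≤ C) ∧
    Filter.liminf (fun r : ℝ =>
      |((hzfin r).toFinset.card : ℝ) - ((hpfin r).toFinset.card : ℝ)|) atTop ≤ C := by
  have hcircle : ∀ N,
      |((hzfin (R N)).toFinset.card : ℝ) - ((hpfin (R N)).toFinset.card : ℝ)| ≤ C := fun N =>
    abs_card_zeros_sub_card_poles_le G z p ρ (hRpos N) hz_inj hp_inj hdisj (hzfin (R N)) hpfin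
      hdiff hzero_iff hzsimple hres (fun n => (hRavoid n N).1) (fun n => (hRavoid n N).2)
      (hbound N)
  refine ⟨hcircle, liminf_le_of_frequently_le ?_ (isBoundedUnder_of ⟨0, fun _ => abs_nonneg _⟩)⟩
  exact (frequently_map.2 (Eventually.of_forall hcircle).frequently).filter_mono hRtop

/-- If the logarithmic derivative of `G` is bounded by `C / R_N` on the circles `|ω| = R_N`,
then the numbers of zeros and poles inside these circles differ by at most `C`;
in particular, `liminf |n₋(R) − n₊(R)| ≤ C`. -/
theorem stmt_4
    (G : ℂ → ℂ) (z p ρ : ℕ → ℂ) (R : ℕ → ℝ) (C : ℝ)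
    (hz_inj : Function.Injective z) (hp_inj : Function.Injective p)
    (hz0 : ∀ n, z n ≠ 0) (hp0 : ∀ n, p n ≠ 0)
    (hdisj : ∀ n m, z n ≠ p m)
    (hzfin : ∀ r : ℝ, {n : ℕ | ‖z n‖ < r}.Finite)
    (hpfin : ∀ r : ℝ, {n : ℕ | ‖p n‖ < r}.Finite)
    (hdiff : ∀ w : ℂ, w ∉ Set.range p → DifferentiableAt ℂ G w)
    (hzero_iff : ∀ w : ℂ, G w = 0 ↔ ∃ n, w = z n)
    (hzsimple : ∀ n, deriv G (z n) ≠ 0)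
    (hres : ∀ n, ρ n ≠ 0 ∧ Tendsto (fun w => (w - p n) * G w) (𝓝[≠] p n) (𝓝 (ρ n)))
    (hRpos : ∀ N, 0 < R N) (hRmono : StrictMono R) (hRtop : Tendsto R atTop atTop)
    (hRavoid : ∀ n N, ‖z n‖ ≠ R N ∧ ‖p n‖ ≠ R N)
    (hC : 0 < C)
    (hbound : ∀ N, ∀ w : ℂ, ‖w‖ = R N →
      ‖deriv G w / G w‖ ≤ C / R N) :
    (∀ N, |((hzfin (R N)).toFinset.card : ℝ) - ((hpfin (R N)).toFinset.card : ℝ)| ≤ C) ∧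
    Filter.liminf (fun r : ℝ =>
      |((hzfin r).toFinset.card : ℝ) - ((hpfin r).toFinset.card : ℝ)|) atTop ≤ C :=
  stmt_4_general G z p ρ R C hz_inj hp_inj hdisj hzfin hpfin hdiff hzero_iff hzsimple hres hRpos
    hRtop hRavoid hbound
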